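/- arXiv:0803.2330 — 3 statements merged into one kernel-verified Lean document; each statement's English description precedes it below -/
import Mathlib

section
/- Let η and ω be real numbers with 0 < η < ω, set ω₁ = √(ω² − η²) and A = 1/√(2ω₁). Let x : ℝ → ℝ be twice differentiable with x''(t) + 2η x'(t) + ω² x(t) = 0 for all t, and define the complex-valued function z : ℝ → ℂ by z(t) = A·(−i·(x'(t) + η x(t)) + ω₁ x(t)). Then z is differentiable and z'(t) = (−η + i ω₁)·z(t) for all t ∈ ℝ. -/
/-!
The coordinate `z` is real-linear in `(x, ẋ)`, so `ż` is the same expression evaluated at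
`(ẋ, ẍ)`. Eliminating `ẍ` with the equation of motion and `ω₁²` with `ω² − η²` turns it into
`(−η + iω₁) z`.
-/

open Complex

/-- Rajeev's complex coordinate of the phase-space point with position `q` and momentum `p`. -/
noncomputable def rajeevCoord (A η ω₁ q p : ℝ) : ℂ :=
  (A : ℂ) * (-I * ((p : ℂ) + (η : ℂ) * (q : ℂ)) + (ω₁ : ℂ) * (q : ℂ))

theorem HasDerivAt.rajeevCoord {A η ω₁ : ℝ} {q p : ℝ → ℝ} {q' p' t : ℝ}
    (hq : HasDerivAt q q' t) (hp : HasDerivAt p p' t) :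
    HasDerivAt (fun s => rajeevCoord A η ω₁ (q s) (p s)) (rajeevCoord A η ω₁ q' p') t :=
  (((hp.ofReal_comp.add (hq.ofReal_comp.const_mul _)).const_mul (-I)).add
    (hq.ofReal_comp.const_mul _)).const_mul _

theorem rajeevCoord_eq_eigenvalue_mul {A η ω ω₁ q v a : ℝ}
    (hω₁ : ω₁ ^ 2 = ω ^ 2 - η ^ 2) (hode : a + 2 * η * v + ω ^ 2 * q = 0) :
    rajeevCoord A η ω₁ v a = (-(η : ℂ) + I * ω₁) * rajeevCoord A η ω₁ q v := by
  have hω₁' : (ω₁ : ℂ) ^ 2 = (ω : ℂ) ^ 2 - (η : ℂ) ^ 2 := by exact_mod_cast hω₁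
  have hode' : (a : ℂ) + 2 * η * v + ω ^ 2 * q = 0 := by exact_mod_cast hode
  unfold rajeevCoord
  linear_combination (-I * A) * hode' + (-I * A * q) * hω₁' + (A * ω₁ * (v + η * q)) * I_sq

theorem rajeev_complex_coordinate_diagonalizes_general
    (η ω : ℝ) (hη : 0 < η) (hηω : η < ω)
    (ω₁ A : ℝ) (hω₁ : ω₁ = Real.sqrt (ω ^ 2 - η ^ 2))
    (x : ℝ → ℝ) (hx : Differentiable ℝ x) (hx' : Differentiable ℝ (deriv x))
    (hode : ∀ t : ℝ, deriv (deriv x) t + 2 * η * deriv x t + ω ^ 2 * x t = 0)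
    (z : ℝ → ℂ)
    (hz : ∀ t : ℝ, z t = (A : ℂ) * (-I * (Complex.ofReal (deriv x t) + (η : ℂ) * (x t : ℂ))
      + (ω₁ : ℂ) * (x t : ℂ))) :
    ∀ t : ℝ, HasDerivAt z ((-(η : ℂ) + I * (ω₁ : ℂ)) * z t) t := by
  intro t
  have hω₁sq : ω₁ ^ 2 = ω ^ 2 - η ^ 2 := by
    rw [hω₁, Real.sq_sqrt]
    nlinarith
  have hz_eq : z = fun s => rajeevCoord A η ω₁ (x s) (deriv x s) := funext hz
  rw [hz_eq, ← rajeevCoord_eq_eigenvalue_mul hω₁sq (hode t)]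
  exact (hx t).hasDerivAt.rajeevCoord (hx' t).hasDerivAt

open Complex in
/-- Rajeev's complex coordinate `z = A(−i(ẋ + ηx) + ω₁ x)` diagonalizes the damped
harmonic oscillator: it satisfies `ż = (−η + iω₁) z`. -/
theorem rajeev_complex_coordinate_diagonalizes
    (η ω : ℝ) (hη : 0 < η) (hηω : η < ω)
    (ω₁ A : ℝ) (hω₁ : ω₁ = Real.sqrt (ω ^ 2 - η ^ 2)) (hA : A = 1 / Real.sqrt (2 * ω₁))
    (x : ℝ → ℝ) (hx : Differentiable ℝ x) (hx' : Differentiable ℝ (deriv x))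
    (hode : ∀ t : ℝ, deriv (deriv x) t + 2 * η * deriv x t + ω ^ 2 * x t = 0)
    (z : ℝ → ℂ)
    (hz : ∀ t : ℝ, z t = (A : ℂ) * (-I * (Complex.ofReal (deriv x t) + (η : ℂ) * (x t : ℂ))
      + (ω₁ : ℂ) * (x t : ℂ))) :
    ∀ t : ℝ, HasDerivAt z ((-(η : ℂ) + I * (ω₁ : ℂ)) * z t) t :=
  rajeev_complex_coordinate_diagonalizes_general η ω hη hηω ω₁ A hω₁ x hx hx' hode z hz
end

section
/- Let n be a natural number, H : (Fin n → ℝ) → (Fin n → ℝ) → ℝ a differentiable function, and q, p : ℝ → (Fin n → ℝ) differentiable curves satisfying p_i'(t) = −(∂H/∂q_i)(q(t),p(t)) + F_i(t) and q_i'(t) = (∂H/∂p_i)(q(t),p(t)) for all t and i, where F : ℝ → (Fin n → ℝ). Suppose there are differentiable functions W_i : ℝ → ℝ with W_i'(q_i(t)) = F_i(t) for all t and i, and set Ĥ(q,p) = H(q,p) − Σ_i W_i(q_i). Then Ĥ is constant along the curve: for all t, s ∈ ℝ, Ĥ(q(t),p(t)) = Ĥ(q(s),p(s)). -/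
/-! Along a solution, `dH/dt = Σᵢ ∂H/∂qᵢ · qᵢ' + Σᵢ ∂H/∂pᵢ · pᵢ' = Σᵢ Fᵢ · qᵢ'`, since the
Hamiltonian terms cancel and only the power of the generalized force remains. By the chain rule
`d/dt Σᵢ Wᵢ(qᵢ) = Σᵢ Wᵢ'(qᵢ) · qᵢ'` is the same quantity, so `Ĥ` has zero derivative along the
curve and is constant. -/

section PartialDerivatives

variable {𝕜 : Type*} [NontriviallyNormedField 𝕜]
  {E F G : Type*} [NormedAddCommGroup E] [NormedSpace 𝕜 E] [NormedAddCommGroup F] [NormedSpace 𝕜 F]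
  [NormedAddCommGroup G] [NormedSpace 𝕜 G] {f : E → F → G} {x : E} {y : F}

theorem fderiv_apply_left_eq_fderiv_uncurry
    (hf : DifferentiableAt 𝕜 (fun z : E × F => f z.1 z.2) (x, y)) (v : E) :
    fderiv 𝕜 (fun a => f a y) x v = fderiv 𝕜 (fun z : E × F => f z.1 z.2) (x, y) (v, 0) := by
  exact DFunLike.congr_fun (hf.hasFDerivAt.comp x (hasFDerivAt_prodMk_left (𝕜 := 𝕜) x y)).fderiv v

theorem fderiv_apply_right_eq_fderiv_uncurry
    (hf : DifferentiableAt 𝕜 (fun z : E × F => f z.1 z.2) (x, y)) (w : F) :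
    fderiv 𝕜 (fun b => f x b) y w = fderiv 𝕜 (fun z : E × F => f z.1 z.2) (x, y) (0, w) := by
  exact DFunLike.congr_fun (hf.hasFDerivAt.comp y (hasFDerivAt_prodMk_right (𝕜 := 𝕜) x y)).fderiv w

theorem HasDerivAt.apply₂ {a : 𝕜 → E} {b : 𝕜 → F} {a' : E} {b' : F} {t : 𝕜}
    (hf : DifferentiableAt 𝕜 (fun z : E × F => f z.1 z.2) (a t, b t))
    (ha : HasDerivAt a a' t) (hb : HasDerivAt b b' t) :
    HasDerivAt (fun s => f (a s) (b s))
      (fderiv 𝕜 (fun u => f u (b t)) (a t) a' + fderiv 𝕜 (fun v => f (a t) v) (b t) b') t := by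
  rw [fderiv_apply_left_eq_fderiv_uncurry hf, fderiv_apply_right_eq_fderiv_uncurry hf,
    ← map_add, Prod.mk_add_mk, add_zero, zero_add]
  exact hf.hasFDerivAt.comp_hasDerivAt t (ha.prodMk hb)

end PartialDerivatives

theorem map_eq_sum_smul_single {ι R M Φ : Type*} [Fintype ι] [DecidableEq ι] [Semiring R]
    [AddCommMonoid M] [Module R M] [FunLike Φ (ι → R) M] [LinearMapClass Φ R (ι → R) M]
    (L : Φ) (x : ι → R) : L x = ∑ i, x i • L (Pi.single i 1) := by
  conv_lhs => rw [pi_eq_sum_univ' x]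
  simp only [map_sum, map_smul]

theorem hasDerivAt_hamiltonian_of_dissipative {ι : Type*} [Fintype ι] [DecidableEq ι]
    {H : (ι → ℝ) → (ι → ℝ) → ℝ} {q p F : ℝ → ι → ℝ} {t : ℝ}
    (hH : DifferentiableAt ℝ (fun qp : (ι → ℝ) × (ι → ℝ) => H qp.1 qp.2) (q t, p t))
    (hp : ∀ i, HasDerivAt (fun s => p s i)
      (-(fderiv ℝ (fun x => H x (p t)) (q t) (Pi.single i 1)) + F t i) t)
    (hq : ∀ i, HasDerivAt (fun s => q s i)
      (fderiv ℝ (fun y => H (q t) y) (p t) (Pi.single i 1)) t) :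
    HasDerivAt (fun s => H (q s) (p s))
      (∑ i, F t i * fderiv ℝ (fun y => H (q t) y) (p t) (Pi.single i 1)) t := by
  refine ((hasDerivAt_pi.2 hq).apply₂ hH (hasDerivAt_pi.2 hp)).congr_deriv ?_
  rw [map_eq_sum_smul_single (fderiv ℝ (fun x => H x (p t)) (q t)),
    map_eq_sum_smul_single (fderiv ℝ (fun y => H (q t) y) (p t)), ← Finset.sum_add_distrib]
  refine Finset.sum_congr rfl fun i _ => ?_
  simp only [smul_eq_mul]
  ring

/-- The substituting Hamiltonian `Ĥ(q,p) = H(q,p) − Σᵢ Wᵢ(qᵢ)` is conserved along the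
common phase curve of the dissipative system and the substituting conservative
system. -/
theorem substituting_hamiltonian_constant_along_phase_curve
    (n : ℕ) (H : (Fin n → ℝ) → (Fin n → ℝ) → ℝ)
    (hH : Differentiable ℝ (fun qp : (Fin n → ℝ) × (Fin n → ℝ) => H qp.1 qp.2))
    (q p : ℝ → Fin n → ℝ) (F : ℝ → Fin n → ℝ)
    (hp : ∀ (t : ℝ) (i : Fin n), HasDerivAt (fun s => p s i)
      (-(fderiv ℝ (fun x => H x (p t)) (q t) (Pi.single i 1)) + F t i) t)
    (hq : ∀ (t : ℝ) (i : Fin n), HasDerivAt (fun s => q s i)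
      (fderiv ℝ (fun y => H (q t) y) (p t) (Pi.single i 1)) t)
    (W : Fin n → ℝ → ℝ) (hW : ∀ i, Differentiable ℝ (W i))
    (hWF : ∀ (t : ℝ) (i : Fin n), deriv (W i) (q t i) = F t i)
    (Hhat : (Fin n → ℝ) → (Fin n → ℝ) → ℝ)
    (hHhat : ∀ a b, Hhat a b = H a b - ∑ i, W i (a i)) :
    ∀ t s : ℝ, Hhat (q t) (p t) = Hhat (q s) (p s) := by
  have hderiv : ∀ u, HasDerivAt (fun u => Hhat (q u) (p u)) 0 u := by
    intro u
    have hH' := hasDerivAt_hamiltonian_of_dissipative (hH _) (hp u) (hq u)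
    have hW' := HasDerivAt.fun_sum (u := Finset.univ) fun i _ =>
      (hW i (q u i)).hasDerivAt.comp u (hq u i)
    simp only [hWF, Function.comp_def] at hW'
    simpa only [hHhat, sub_self] using hH'.fun_sub hW'
  intro t s
  exact is_const_of_deriv_eq_zero (fun u => (hderiv u).differentiableAt)
    (fun u => (hderiv u).deriv) t s
end

section
/- Let x₀, y₀, ẋ₀, ẏ₀ be real numbers with ẋ₀ + ẏ₀ = 0, and define x(t) = −(ẏ₀ − ẋ₀ − 4x₀)/4 + e^{−2t}(ẏ₀ − ẋ₀)/4 and y(t) = (ẏ₀ − ẋ₀ + 4y₀)/4 − e^{−2t}(ẏ₀ − ẋ₀)/4. Then x and y satisfy the conservative system x''(t) = 4x(t) + (ẏ₀ − ẋ₀) − 4x₀ and y''(t) = 4y(t) − (ẏ₀ − ẋ₀) − 4y₀ for all t ∈ ℝ. -/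
open Real

lemma deriv_mul_exp_mul (a k : ℝ) :
    deriv (fun t => a * exp (k * t)) = fun t => a * k * exp (k * t) := by
  funext t
  have hlin : HasDerivAt (fun t : ℝ => k * t) k t := by
    simpa using (hasDerivAt_id t).const_mul k
  convert (hlin.exp.const_mul a).deriv using 1
  ring

lemma deriv_deriv_const_add_mul_exp_mul (c a k t : ℝ) :
    deriv (deriv fun t => c + a * exp (k * t)) t = k ^ 2 * (a * exp (k * t)) := by
  rw [deriv_const_add', deriv_mul_exp_mul, deriv_mul_exp_mul]
  ring

theorem two_dim_solution_satisfies_conservative_system_general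
    (x₀ y₀ vx₀ vy₀ : ℝ) (x y : ℝ → ℝ)
    (hx : ∀ t : ℝ, x t = -(vy₀ - vx₀ - 4 * x₀) / 4
      + Real.exp (-2 * t) * (vy₀ - vx₀) / 4)
    (hy : ∀ t : ℝ, y t = (vy₀ - vx₀ + 4 * y₀) / 4
      - Real.exp (-2 * t) * (vy₀ - vx₀) / 4) :
    (∀ t : ℝ, deriv (deriv x) t = 4 * x t + (vy₀ - vx₀) - 4 * x₀) ∧
      (∀ t : ℝ, deriv (deriv y) t = 4 * y t - (vy₀ - vx₀) - 4 * y₀) := by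
  have hx_exp : x = fun t => -(vy₀ - vx₀ - 4 * x₀) / 4 + (vy₀ - vx₀) / 4 * exp (-2 * t) := by
    funext t; rw [hx t]; ring
  have hy_exp : y = fun t => (vy₀ - vx₀ + 4 * y₀) / 4 + -(vy₀ - vx₀) / 4 * exp (-2 * t) := by
    funext t; rw [hy t]; ring
  refine ⟨fun t => ?_, fun t => ?_⟩
  · rw [hx_exp, deriv_deriv_const_add_mul_exp_mul]; ring
  · rw [hy_exp, deriv_deriv_const_add_mul_exp_mul]; ring

/-- The solution of the two-dimensional dissipative system with `vx₀ + vy₀ = 0`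
also satisfies the substituting conservative system
`ẍ = 4x + (vy₀ − vx₀) − 4x₀`, `ÿ = 4y − (vy₀ − vx₀) − 4y₀`. -/
theorem two_dim_solution_satisfies_conservative_system
    (x₀ y₀ vx₀ vy₀ : ℝ) (hv : vx₀ + vy₀ = 0) (x y : ℝ → ℝ)
    (hx : ∀ t : ℝ, x t = -(vy₀ - vx₀ - 4 * x₀) / 4
      + Real.exp (-2 * t) * (vy₀ - vx₀) / 4)
    (hy : ∀ t : ℝ, y t = (vy₀ - vx₀ + 4 * y₀) / 4
      - Real.exp (-2 * t) * (vy₀ - vx₀) / 4) :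
    (∀ t : ℝ, deriv (deriv x) t = 4 * x t + (vy₀ - vx₀) - 4 * x₀) ∧
      (∀ t : ℝ, deriv (deriv y) t = 4 * y t - (vy₀ - vx₀) - 4 * y₀) :=
  two_dim_solution_satisfies_conservative_system_general x₀ y₀ vx₀ vy₀ x y hx hy
end
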